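/- arXiv:2507.04521 — 2 statements merged into one kernel-verified Lean document; each statement's English description precedes it below -/
import Mathlib

section
/- For any α ∈ [0,1] and any n ≥ 1 for which the n-th step of Shulga's algorithm applied to α is defined, the Shulga sequences satisfy c_n ≥ b_n. -/
/-!
Write `(q, q')` for the denominators of the last two convergents of `[0; a₁, …, aₙ]`. Then
`[0; a₁, …, aₙ + t] = [0; a₁, …, aₙ] ± t / (q (q + q' t))`, and this gap is increasing in `t`
and decreasing in `(q, q')`.

After `k` steps, `2 ≤ bᵢ ≤ cᵢ` and `α - [0; b₁, …, b_k] = [0; c₁, …, c_k + w]` with `w ∈ [0, 1)`.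
Since `bᵢ ≤ cᵢ`, the denominators of the `b`'s are at most those of the `c`'s, so the same gap
can also be written with the `b`'s: `α - [0; c₁, …, c_k] = [0; b₁, …, b_k + t]` with
`t ∈ [0, 1)`, and `b_{k+1} = ⌊1/t⌋ + 1`. Replacing the tail `t` by `1 / b_{k+1} < t` leaves a
gap smaller than the one of `[0; c₁, …, c_k + 1 / b_{k+1}]`, so
`α - [0; b₁, …, b_{k+1}] = [0; c₁, …, c_k + s]` with `s < 1 / b_{k+1}`. Hence
`c_{k+1} = ⌊1/s⌋ ≥ b_{k+1}`, and `w = fract (1/s)` restores the invariant. Digits `≥ 2` make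
these tails exactly the Gauss iterates from which the algorithm reads its partial quotients.
-/

noncomputable section

namespace ShulgaPaper

open Filter Topology

/-- The value of the finite continued fraction `[0; a₁, …, aₙ]`
(the empty continued fraction has value `0`). -/
def cf : List ℕ → ℝ
  | [] => 0
  | a :: l => 1 / ((a : ℝ) + cf l)

/-- Iterates of the Gauss map, starting from the fractional part of `x`. -/
def gaussIter (x : ℝ) : ℕ → ℝ
  | 0 => Int.fract x
  | n + 1 => Int.fract (1 / gaussIter x n)

/-- The `n`-th partial quotient `aₙ(x)` of the continued fraction expansion of `x`
(for `n ≥ 1`; a junk value is returned if it is undefined). -/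
def pq (x : ℝ) (n : ℕ) : ℕ := ⌊1 / gaussIter x (n - 1)⌋₊

/-- The `n`-th partial quotient `aₙ(x)` of `x` is defined (`n ≥ 1`), i.e. `n` does not
exceed the length of the continued fraction expansion of `x`. -/
def pqDefined (x : ℝ) (n : ℕ) : Prop := gaussIter x (n - 1) ≠ 0

/-- The set `G` of real numbers that are rational or whose partial quotients diverge. -/
def G : Set ℝ :=
  {x | (∃ q : ℚ, x = (q : ℝ)) ∨ Tendsto (fun n => pq x n) atTop atTop}

/-- The list of pairs `(b_k, c_k)`, `k = 1, …, n`, produced by (a totalized version of)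
Shulga's algorithm applied to `α`. -/
def shulgaList (α : ℝ) : ℕ → List (ℕ × ℕ)
  | 0 => []
  | n + 1 =>
      let L := shulgaList α n
      let b := pq (α - cf (L.map Prod.snd)) (n + 1) + 1
      let c := pq (α - cf (L.map Prod.fst ++ [b])) (n + 1)
      L ++ [(b, c)]

/-- The list `[b₁, …, bₙ]` of Shulga's algorithm applied to `α`. -/
def bList (α : ℝ) (n : ℕ) : List ℕ := (shulgaList α n).map Prod.fst

/-- The list `[c₁, …, cₙ]` of Shulga's algorithm applied to `α`. -/
def cList (α : ℝ) (n : ℕ) : List ℕ := (shulgaList α n).map Prod.snd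

/-- `bₙ` of Shulga's algorithm applied to `α` (for `n ≥ 1`). -/
def shulgaB (α : ℝ) (n : ℕ) : ℕ := ((shulgaList α n).getLast?.getD (0, 0)).1

/-- `cₙ` of Shulga's algorithm applied to `α` (for `n ≥ 1`). -/
def shulgaC (α : ℝ) (n : ℕ) : ℕ := ((shulgaList α n).getLast?.getD (0, 0)).2

/-- The first `n` steps of Shulga's algorithm applied to `α` are defined: for each step
`k + 1 ≤ n`, the partial quotients `a_{k+1}(α - [0;c₁,…,c_k])` and
`a_{k+1}(α - [0;b₁,…,b_{k+1}])` defining `b_{k+1}` and `c_{k+1}` exist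
(in particular the algorithm has not stopped before step `n`). -/
def shulgaDefined (α : ℝ) (n : ℕ) : Prop :=
  ∀ k < n, pqDefined (α - cf (cList α k)) (k + 1) ∧
    pqDefined (α - cf (bList α (k + 1))) (k + 1)

/-- The half-open interval whose included endpoint is `x` and excluded endpoint is `y`,
the smaller one being the left endpoint. -/
def hIco (x y : ℝ) : Set ℝ := if x ≤ y then Set.Ico x y else Set.Ioc y x

/-- The list `[a 1, …, a n]`. -/
def listOf (a : ℕ → ℕ) (n : ℕ) : List ℕ := (List.range n).map fun i => a (i + 1)

/-- The interval `B_k` determined by the digits `b`, `c` (`k ≥ 1`). -/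
def Bset (b c : ℕ → ℕ) (k : ℕ) : Set ℝ :=
  hIco (cf (listOf b (k - 1) ++ [b k - 1]) + cf (listOf c (k - 1)))
    (cf (listOf b k) + cf (listOf c (k - 1)))

/-- The interval `C_k` determined by the digits `b`, `c` (`k ≥ 1`). -/
def Cset (b c : ℕ → ℕ) (k : ℕ) : Set ℝ :=
  hIco (cf (listOf c k) + cf (listOf b k))
    (cf (listOf c (k - 1) ++ [c k + 1]) + cf (listOf b k))

/-- `A₀ = [0,1]` and `Aₙ = ⋂_{k=1}^{n} (B_k ∩ C_k)` for `n ≥ 1`. -/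
def Aset (b c : ℕ → ℕ) : ℕ → Set ℝ
  | 0 => Set.Icc 0 1
  | n + 1 => ⋂ k ∈ Finset.Icc 1 (n + 1), (Bset b c k ∩ Cset b c k)

/-- The denominators of the convergents of `[0; a 1, a 2, …]`:
`q₀ = 1`, `q₁ = a 1`, `q_k = a k * q_{k-1} + q_{k-2}`. -/
def qden (a : ℕ → ℕ) : ℕ → ℕ
  | 0 => 1
  | 1 => a 1
  | n + 2 => a (n + 2) * qden a (n + 1) + qden a n

/-- `cfWithTail [a₁, …, aₙ] t = [0; a₁, …, aₙ + t]`. -/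
def cfWithTail : List ℕ → ℝ → ℝ
  | [], t => t
  | a :: l, t => 1 / (a + cfWithTail l t)

/-- The denominators `(qₙ, qₙ₋₁)` of the last two convergents of `[0; a₁, …, aₙ]`. -/
def cfDens (l : List ℕ) : ℝ × ℝ := l.foldl (fun q (a : ℕ) => ((a : ℝ) * q.1 + q.2, q.1)) (1, 0)

lemma cf_eq_cfWithTail_zero (l : List ℕ) : cf l = cfWithTail l 0 := by
  induction l with
  | nil => rfl
  | cons a l ih => simp only [cf, cfWithTail, ih]

lemma cfWithTail_append_singleton (l : List ℕ) (d : ℕ) (t : ℝ) :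
    cfWithTail (l ++ [d]) t = cfWithTail l (1 / (d + t)) := by
  induction l with
  | nil => rfl
  | cons a l ih => simp only [List.cons_append, cfWithTail, ih]

lemma cf_append_singleton (l : List ℕ) (d : ℕ) : cf (l ++ [d]) = cfWithTail l (1 / d) := by
  rw [cf_eq_cfWithTail_zero, cfWithTail_append_singleton, add_zero]

lemma cfDens_nil : cfDens [] = (1, 0) := rfl

lemma cfDens_append_singleton (l : List ℕ) (d : ℕ) :
    cfDens (l ++ [d]) = (d * (cfDens l).1 + (cfDens l).2, (cfDens l).1) := by
  simp [cfDens, List.foldl_append]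

lemma cfDens_pos {l : List ℕ} (hl : ∀ a ∈ l, 1 ≤ a) : 0 < (cfDens l).1 ∧ 0 ≤ (cfDens l).2 := by
  induction l using List.reverseRecOn with
  | nil => simp [cfDens_nil]
  | append_singleton l d ih =>
    obtain ⟨hq, hq'⟩ := ih fun a ha => hl a (List.mem_append_left _ ha)
    have hd : (1 : ℝ) ≤ d := by exact_mod_cast hl d (by simp)
    rw [cfDens_append_singleton]
    exact ⟨by nlinarith, hq.le⟩

lemma cfDens_mono {l m : List ℕ} (h : List.Forall₂ (· ≤ ·) l m) : cfDens l ≤ cfDens m := by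
  let step := fun (q : ℝ × ℝ) (a : ℕ) => ((a : ℝ) * q.1 + q.2, q.1)
  suffices ∀ q Q : ℝ × ℝ, 0 ≤ q → q ≤ Q → l.foldl step q ≤ m.foldl step Q
    from this (1, 0) (1, 0) (by simp [Prod.le_def]) le_rfl
  induction h with
  | nil => exact fun _ _ _ h => h
  | @cons a b l m hab _ ih =>
    rintro q Q ⟨hq, hq'⟩ ⟨hqQ, hqQ'⟩
    have hab' : (a : ℝ) ≤ b := by exact_mod_cast hab
    have hq0 : (0 : ℝ) ≤ q.1 := hq
    have hq0' : (0 : ℝ) ≤ q.2 := hq'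
    exact ih _ _ ⟨show (0 : ℝ) ≤ a * q.1 + q.2 by positivity, hq⟩
      ⟨show (a : ℝ) * q.1 + q.2 ≤ b * Q.1 + Q.2 by gcongr, hqQ⟩

def cfGap (q : ℝ × ℝ) (t : ℝ) : ℝ := t / (q.1 * (q.1 + q.2 * t))

section cfGap

variable {q : ℝ × ℝ}

lemma cfGap_zero : cfGap q 0 = 0 := by simp [cfGap]

lemma cfGap_lt_cfGap (hq : 0 < q.1) (hq' : 0 ≤ q.2) {s t : ℝ} (hs : 0 ≤ s) (hst : s < t) :
    cfGap q s < cfGap q t := by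
  have ht : 0 ≤ t := hs.trans hst.le
  unfold cfGap
  rw [div_lt_div_iff₀ (by positivity) (by positivity)]
  nlinarith [mul_pos (mul_pos hq hq) (sub_pos.2 hst)]

lemma cfGap_le_cfGap_of_le {Q : ℝ × ℝ} (hQ : 0 < Q.1) (hQ' : 0 ≤ Q.2) (hQq : Q ≤ q) {t : ℝ}
    (ht : 0 ≤ t) : cfGap q t ≤ cfGap Q t := by
  unfold cfGap
  have h1 : Q.1 ≤ q.1 := hQq.1
  have h2 : Q.2 ≤ q.2 := hQq.2
  gcongr
  linarith

lemma cfGap_continuousOn (hq : 0 < q.1) (hq' : 0 ≤ q.2) : ContinuousOn (cfGap q) (Set.Ici 0) :=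
  continuousOn_id.div (by fun_prop) fun t (ht : 0 ≤ t) => by positivity

lemma exists_cfGap_eq (hq : 0 < q.1) (hq' : 0 ≤ q.2) {η u : ℝ} (hu : 0 ≤ u) (hη : 0 ≤ η)
    (hηu : η < cfGap q u) : ∃ s, 0 ≤ s ∧ s < u ∧ cfGap q s = η := by
  obtain ⟨s, ⟨hs0, hsu⟩, hs⟩ := intermediate_value_Icc hu
    ((cfGap_continuousOn hq hq').mono Set.Icc_subset_Ici_self)
    ⟨cfGap_zero.symm ▸ hη, hηu.le⟩
  exact ⟨s, hs0, hsu.lt_of_ne (by rintro rfl; exact hηu.ne' hs), hs⟩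

lemma cfGap_inv_add_sub (hq : 0 < q.1) (hq' : 0 ≤ q.2) {d t : ℝ} (hd : 0 < d) (ht : 0 ≤ t) :
    cfGap q (1 / (d + t)) - cfGap q (1 / d) = -cfGap (d * q.1 + q.2, q.1) t := by
  unfold cfGap
  have : 0 < d * q.1 + q.2 := by positivity
  field_simp
  ring

lemma cfGap_sub_cfGap_inv_lt {Q : ℝ × ℝ} (hQ : 0 < Q.1) (hQ' : 0 ≤ Q.2) (hq : 0 < q.1)
    (hq' : 0 ≤ q.2) {t β : ℝ} (ht : 0 < t) (hβ : 1 ≤ β) (hβt : β * t ≤ t + 1)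
    (hgap : cfGap Q t < cfGap q 1) :
    cfGap Q t - cfGap Q (1 / β) < cfGap q (1 / β) := by
  have hD : 0 < Q.1 + Q.2 * t := by positivity
  have hE : 0 < β * Q.1 + Q.2 := by positivity
  have hsub : cfGap Q t - cfGap Q (1 / β) =
      (β * t - 1) / ((Q.1 + Q.2 * t) * (β * Q.1 + Q.2)) := by
    unfold cfGap; field_simp; ring
  have hinv : cfGap q (1 / β) = 1 / (q.1 * (β * q.1 + q.2)) := by
    unfold cfGap; field_simp
  have hstar : t * (q.1 * (q.1 + q.2)) < Q.1 * (Q.1 + Q.2 * t) := by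
    unfold cfGap at hgap
    rwa [div_lt_div_iff₀ (by positivity) (by positivity), mul_one, one_mul] at hgap
  rw [hsub, hinv, div_lt_div_iff₀ (by positivity) (by positivity), one_mul]
  calc (β * t - 1) * (q.1 * (β * q.1 + q.2)) ≤ t * (q.1 * (β * q.1 + q.2)) := by
        gcongr; linarith
    _ ≤ β * (t * (q.1 * (q.1 + q.2))) := by nlinarith [mul_nonneg (mul_nonneg ht.le hq.le) hq']
    _ < β * (Q.1 * (Q.1 + Q.2 * t)) := by gcongr
    _ ≤ (Q.1 + Q.2 * t) * (β * Q.1 + Q.2) := by nlinarith [mul_nonneg hQ' hD.le]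

end cfGap

lemma cfWithTail_eq_cf_add {l : List ℕ} (hl : ∀ a ∈ l, 1 ≤ a) {t : ℝ} (ht : 0 ≤ t) :
    cfWithTail l t = cf l + (-1) ^ l.length * cfGap (cfDens l) t := by
  induction l using List.reverseRecOn generalizing t with
  | nil => simp [cfWithTail, cf, cfGap, cfDens_nil]
  | append_singleton l d ih =>
    have hl' : ∀ a ∈ l, 1 ≤ a := fun a ha => hl a (List.mem_append_left _ ha)
    have hd : (0 : ℝ) < d := by exact_mod_cast hl d (by simp)
    obtain ⟨hq, hq'⟩ := cfDens_pos hl'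
    rw [cf_append_singleton, cfWithTail_append_singleton, ih hl' (by positivity),
      ih hl' (by positivity), cfDens_append_singleton, List.length_append, List.length_singleton,
      pow_succ]
    linear_combination (-1) ^ l.length * cfGap_inv_add_sub hq hq' hd ht

lemma cfWithTail_mem_Ico {l : List ℕ} (hl : ∀ a ∈ l, 2 ≤ a) {t : ℝ} (ht : t ∈ Set.Ico 0 1) :
    cfWithTail l t ∈ Set.Ico 0 1 := by
  induction l with
  | nil => exact ht
  | cons a l ih =>
    have ha : (2 : ℝ) ≤ a := by exact_mod_cast hl a (by simp)
    have h := (ih fun b hb => hl b (by simp [hb])).1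
    simp only [cfWithTail, Set.mem_Ico]
    constructor
    · positivity
    · rw [div_lt_one (by positivity)]; linarith

lemma gaussIter_succ_eq (x : ℝ) (n : ℕ) :
    gaussIter x (n + 1) = gaussIter (Int.fract (1 / Int.fract x)) n := by
  induction n with
  | zero => simp [gaussIter]
  | succ n ih => rw [gaussIter, ih, gaussIter]

lemma gaussIter_cfWithTail {l : List ℕ} (hl : ∀ a ∈ l, 2 ≤ a) {t : ℝ} (ht : t ∈ Set.Ico 0 1) :
    gaussIter (cfWithTail l t) l.length = t := by
  induction l with
  | nil => exact Int.fract_eq_self.2 ht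
  | cons a l ih =>
    have hl' : ∀ b ∈ l, 2 ≤ b := fun b hb => hl b (by simp [hb])
    rw [List.length_cons, gaussIter_succ_eq, Int.fract_eq_self.2 (cfWithTail_mem_Ico hl ht),
      cfWithTail, one_div_one_div, Int.fract_natCast_add,
      Int.fract_eq_self.2 (cfWithTail_mem_Ico hl' ht), ih hl']

lemma forall_le_of_forall₂ {l m : List ℕ} (h : List.Forall₂ (· ≤ ·) l m) {k : ℕ}
    (hl : ∀ a ∈ l, k ≤ a) : ∀ a ∈ m, k ≤ a := by
  induction h with
  | nil => simp
  | cons hab _ ih =>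
    simp only [List.mem_cons, forall_eq_or_imp] at hl ⊢
    exact ⟨hl.1.trans hab, ih hl.2⟩

lemma cfWithTail_append_floor (l : List ℕ) {s : ℝ} (hs : 0 < s) :
    cfWithTail (l ++ [⌊1 / s⌋₊]) (Int.fract (1 / s)) = cfWithTail l s := by
  rw [cfWithTail_append_singleton, natCast_floor_eq_intCast_floor (by positivity),
    Int.floor_add_fract, one_div_one_div]

lemma exists_cfWithTail_swap {l m : List ℕ} (hl : ∀ a ∈ l, 1 ≤ a)
    (hlm : List.Forall₂ (· ≤ ·) l m) {x w : ℝ} (hw : w ∈ Set.Ico 0 1)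
    (hx : x - cf l = cfWithTail m w) : ∃ t ∈ Set.Ico (0 : ℝ) 1, x - cf m = cfWithTail l t := by
  have hm := forall_le_of_forall₂ hlm hl
  obtain ⟨hq, hq'⟩ := cfDens_pos hl
  obtain ⟨hQ, hQ'⟩ := cfDens_pos hm
  have hgap : cfGap (cfDens m) w < cfGap (cfDens l) 1 :=
    calc cfGap (cfDens m) w < cfGap (cfDens m) 1 := cfGap_lt_cfGap hQ hQ' hw.1 hw.2
      _ ≤ cfGap (cfDens l) 1 := cfGap_le_cfGap_of_le hq hq' (cfDens_mono hlm) zero_le_one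
  obtain ⟨t, ht0, ht1, ht⟩ := exists_cfGap_eq hq hq' zero_le_one
    (by unfold cfGap; have := hw.1; positivity) hgap
  refine ⟨t, ⟨ht0, ht1⟩, ?_⟩
  rw [cfWithTail_eq_cf_add hm hw.1] at hx
  rw [cfWithTail_eq_cf_add hl ht0, ht, hlm.length_eq]
  linarith

lemma exists_sub_cf_append_eq_cfWithTail {lb lc : List ℕ} (hb : ∀ a ∈ lb, 1 ≤ a)
    (hc : ∀ a ∈ lc, 1 ≤ a) (hlen : lb.length = lc.length) {x t w : ℝ} (ht : 0 < t)
    (hw : w ∈ Set.Ico 0 1) (hxt : x - cf lc = cfWithTail lb t)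
    (hxw : x - cf lb = cfWithTail lc w) {β : ℕ} (hβt : 1 < β * t) (hβt' : β * t ≤ t + 1) :
    ∃ s : ℝ, 0 < s ∧ s * β < 1 ∧ x - cf (lb ++ [β]) = cfWithTail lc s := by
  obtain ⟨hQ, hQ'⟩ := cfDens_pos hb
  obtain ⟨hq, hq'⟩ := cfDens_pos hc
  have hβ : (0 : ℝ) < β := pos_of_mul_pos_left (one_pos.trans hβt) ht.le
  have hβ1 : (1 : ℝ) ≤ β := Nat.one_le_cast.2 (Nat.cast_pos.1 hβ)
  have hε : (-1 : ℝ) ^ lb.length ≠ 0 := pow_ne_zero _ (by norm_num)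
  have hQt := cfWithTail_eq_cf_add hb ht.le
  have hqw := cfWithTail_eq_cf_add hc hw.1
  rw [← hlen] at hqw
  have hgap_eq : cfGap (cfDens lb) t = cfGap (cfDens lc) w :=
    mul_left_cancel₀ hε (by linarith)
  have hgap : cfGap (cfDens lb) t < cfGap (cfDens lc) 1 :=
    hgap_eq ▸ cfGap_lt_cfGap hq hq' hw.1 hw.2
  have hβinv : 1 / (β : ℝ) < t := by rw [div_lt_iff₀ hβ]; linarith
  have hη : 0 < cfGap (cfDens lb) t - cfGap (cfDens lb) (1 / β) :=
    sub_pos.2 (cfGap_lt_cfGap hQ hQ' (by positivity) hβinv)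
  obtain ⟨s, hs0, hsβ, hsη⟩ := exists_cfGap_eq hq hq' (by positivity) hη.le
    (cfGap_sub_cfGap_inv_lt hQ hQ' hq hq' ht hβ1 hβt' hgap)
  have hs : 0 < s := hs0.lt_of_ne (by rintro rfl; rw [cfGap_zero] at hsη; exact hη.ne hsη)
  refine ⟨s, hs, by rwa [lt_div_iff₀ hβ] at hsβ, ?_⟩
  rw [cf_append_singleton, cfWithTail_eq_cf_add hb (by positivity),
    cfWithTail_eq_cf_add hc hs0, ← hlen, hsη]
  linear_combination hxt + hQt

lemma pq_succ (x : ℝ) (n : ℕ) : pq x (n + 1) = ⌊1 / gaussIter x n⌋₊ := rfl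

lemma bList_succ (α : ℝ) (n : ℕ) :
    bList α (n + 1) = bList α n ++ [pq (α - cf (cList α n)) (n + 1) + 1] := by
  simp [bList, cList, shulgaList]

lemma cList_succ (α : ℝ) (n : ℕ) :
    cList α (n + 1) = cList α n ++
      [pq (α - cf (bList α n ++ [pq (α - cf (cList α n)) (n + 1) + 1])) (n + 1)] := by
  simp [bList, cList, shulgaList]

lemma length_bList (α : ℝ) (n : ℕ) : (bList α n).length = n := by
  induction n with
  | zero => rfl
  | succ n ih => simp [bList_succ, ih]

lemma shulgaB_le_shulgaC {α : ℝ} {n : ℕ} (h : List.Forall₂ (· ≤ ·) (bList α n) (cList α n)) :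
    shulgaB α n ≤ shulgaC α n := by
  rw [bList, cList, List.forall₂_map_left_iff, List.forall₂_map_right_iff,
    List.forall₂_same] at h
  unfold shulgaB shulgaC
  cases hlast : (shulgaList α n).getLast? with
  | none => rfl
  | some p => exact h p (List.mem_of_getLast? hlast)

lemma floor_one_div_add_one_bounds {t : ℝ} (ht : 0 < t) (ht1 : t < 1) :
    2 ≤ ⌊1 / t⌋₊ + 1 ∧ 1 < ((⌊1 / t⌋₊ + 1 : ℕ) : ℝ) * t ∧ ((⌊1 / t⌋₊ + 1 : ℕ) : ℝ) * t ≤ t + 1 := by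
  have hfloor := (le_div_iff₀ ht).1 (Nat.floor_le (one_div_pos.2 ht).le)
  refine ⟨?_, ?_, by push_cast; linarith⟩
  · have : 1 ≤ ⌊1 / t⌋₊ := Nat.le_floor (by rw [Nat.cast_one, le_div_iff₀ ht]; linarith)
    omega
  · rw [← div_lt_iff₀ ht]
    exact_mod_cast Nat.lt_floor_add_one _

def ShulgaInvariant (α : ℝ) (k : ℕ) : Prop :=
  List.Forall₂ (fun b c => 2 ≤ b ∧ b ≤ c) (bList α k) (cList α k) ∧
    ∃ w ∈ Set.Ico (0 : ℝ) 1, α - cf (bList α k) = cfWithTail (cList α k) w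

lemma ShulgaInvariant.succ {α : ℝ} {k : ℕ} (h : ShulgaInvariant α k)
    (hdef : pqDefined (α - cf (cList α k)) (k + 1)) : ShulgaInvariant α (k + 1) := by
  obtain ⟨hdig, w, hw, hxw⟩ := h
  obtain ⟨hb2, hbc⟩ := (List.forall₂_and_left _ _).1 hdig
  have hc2 := forall_le_of_forall₂ hbc hb2
  have hb1 : ∀ a ∈ bList α k, 1 ≤ a := fun a ha => one_le_two.trans (hb2 a ha)
  have hc1 : ∀ a ∈ cList α k, 1 ≤ a := fun a ha => one_le_two.trans (hc2 a ha)
  have hlen : (bList α k).length = (cList α k).length := hbc.length_eq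
  obtain ⟨t, ht, hxt⟩ := exists_cfWithTail_swap hb1 hbc hw hxw
  have hgt : gaussIter (α - cf (cList α k)) k = t := by
    simpa only [hxt, length_bList] using gaussIter_cfWithTail hb2 ht
  have ht0 : 0 < t := ht.1.lt_of_ne (Ne.symm (hgt ▸ hdef))
  have hβ : pq (α - cf (cList α k)) (k + 1) + 1 = ⌊1 / t⌋₊ + 1 := by rw [pq_succ, hgt]
  obtain ⟨hβ2, hβt, hβt'⟩ := floor_one_div_add_one_bounds ht0 ht.2
  set β := ⌊1 / t⌋₊ + 1
  obtain ⟨s, hs0, hsβ, hxs⟩ :=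
    exists_sub_cf_append_eq_cfWithTail hb1 hc1 hlen ht0 hw hxt hxw hβt hβt'
  have hs1 : s < 1 := by nlinarith [(Nat.one_le_cast (α := ℝ)).2 (one_le_two.trans hβ2)]
  have hγ : pq (α - cf (bList α k ++ [β])) (k + 1) = ⌊1 / s⌋₊ := by
    have hk : (cList α k).length = k := hlen ▸ length_bList α k
    simpa only [pq_succ, hxs, hk] using
      congrArg (⌊1 / ·⌋₊) (gaussIter_cfWithTail hc2 ⟨hs0.le, hs1⟩)
  have hβγ : β ≤ ⌊1 / s⌋₊ := Nat.le_floor (by rw [le_div_iff₀ hs0]; linarith)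
  rw [ShulgaInvariant, bList_succ, cList_succ, hβ, hγ]
  refine ⟨List.rel_append hdig (.cons ⟨hβ2, hβγ⟩ .nil), Int.fract (1 / s),
    ⟨Int.fract_nonneg _, Int.fract_lt_one _⟩, ?_⟩
  rw [cfWithTail_append_floor _ hs0]
  exact hxs

lemma shulgaInvariant_of_pqDefined {α : ℝ} (hα : α ∈ Set.Ico (0 : ℝ) 1) {n : ℕ}
    (hdef : ∀ k < n, pqDefined (α - cf (cList α k)) (k + 1)) : ShulgaInvariant α n := by
  induction n with
  | zero => exact ⟨.nil, α, hα, by simp [bList, cList, shulgaList, cf, cfWithTail]⟩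
  | succ n ih => exact (ih fun k hk => hdef k (by omega)).succ (hdef n (by omega))

/-- for `n ≥ 1`, the Shulga sequences satisfy `cₙ ≥ bₙ`. -/
theorem stmt3 (α : ℝ) (hα : α ∈ Set.Icc (0 : ℝ) 1) (n : ℕ) (hn : 1 ≤ n)
    (hdef : shulgaDefined α n) : shulgaB α n ≤ shulgaC α n := by
  have hα1 : α < 1 := by
    refine hα.2.lt_of_ne fun h => (hdef 0 hn).1 ?_
    simp [gaussIter, cList, shulgaList, cf, h]
  exact shulgaB_le_shulgaC
    ((shulgaInvariant_of_pqDefined ⟨hα.1, hα1⟩ fun k hk => (hdef k hk).1).1.imp fun _ _ h => h.2)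

end ShulgaPaper
end
end

section
/- Let n ≥ 1 and let b_1,…,b_n ≥ 2 and c_1,…,c_n ≥ 1 be integers. Then B_n ∩ C_n ≠ ∅ if and only if 1/(t_{n−1}(t_n + t_{n−1})) < 1/(q_n(q_n − q_{n−1})). -/
noncomputable section

namespace ShulgaPaper

open Filter Topology

/-!
Let `pₖ/qₖ` and `sₖ/tₖ` be the convergents of `b` and `c`, and `σ = (-1)ⁿ`. Every endpoint of
`Bₙ` and `Cₙ` is a convergent-like fraction `(x pₙ₋₁ + pₙ₋₂)/(x qₙ₋₁ + qₙ₋₂)` (resp. in `s`, `t`)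
shifted by a common constant, so by the determinant identity `qₖ pₖ₋₁ - qₖ₋₁ pₖ = (-1)ᵏ` all
differences of endpoints are `σ` times explicit positive numbers: going from the included to the
excluded endpoint one moves by `σ/(qₙ(qₙ - qₙ₋₁))` in `Bₙ` and by `σ/(tₙ(tₙ + tₙ₋₁))` in `Cₙ`,
and the excluded endpoint of `Bₙ` lies `σ/(tₙ₋₁(tₙ + tₙ₋₁))` beyond that of `Cₙ`. Two intervals
oriented the same way and placed like this meet iff this last gap is shorter than `Bₙ`.
The convergents are read off the products of the matrices `!![a, 1; 1, 0]`.
-/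

open Matrix

-- `cfMat [a₁, …, aₙ] = !![qₙ, qₙ₋₁; pₙ, pₙ₋₁]` for the convergents `pₖ/qₖ` of `[0; a₁, …, aₙ]`,
-- with `p₋₁ = 1`, `q₋₁ = 0`.
def cfMat (l : List ℕ) : Matrix (Fin 2) (Fin 2) ℝ :=
  (l.map fun a => !![(a : ℝ), 1; 1, 0]).prod

theorem cfMat_nil : cfMat [] = 1 := rfl

theorem cfMat_cons (a : ℕ) (l : List ℕ) : cfMat (a :: l) = !![(a : ℝ), 1; 1, 0] * cfMat l :=
  rfl

theorem cfMat_append_singleton (l : List ℕ) (m : ℕ) :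
    cfMat (l ++ [m]) = cfMat l * !![(m : ℝ), 1; 1, 0] := by
  simp [cfMat]

theorem det_cfMat (l : List ℕ) : (cfMat l).det = (-1) ^ l.length := by
  induction l with
  | nil => simp [cfMat_nil]
  | cons a l ih =>
    rw [cfMat_cons, det_mul, ih, det_fin_two_of, List.length_cons, pow_succ]
    ring

theorem cfMat_nonneg (l : List ℕ) (i j : Fin 2) : 0 ≤ cfMat l i j := by
  induction l generalizing i j with
  | nil => rcases eq_or_ne i j with rfl | h <;> simp [cfMat_nil, one_apply, *]
  | cons a l ih =>
    have hgen : ∀ i k, 0 ≤ !![(a : ℝ), 1; 1, 0] i k := by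
      intro i k; fin_cases i <;> fin_cases k <;> simp
    rw [cfMat_cons, mul_apply]
    exact Finset.sum_nonneg fun k _ => mul_nonneg (hgen i k) (ih k j)

theorem one_le_cfMat_zero_zero (l : List ℕ) (hl : ∀ a ∈ l, 1 ≤ a) : 1 ≤ cfMat l 0 0 := by
  induction l with
  | nil => simp [cfMat_nil]
  | cons a l ih =>
    have ha : (1 : ℝ) ≤ a := by exact_mod_cast hl a List.mem_cons_self
    have hq := ih fun x hx => hl x (List.mem_cons_of_mem _ hx)
    have hp := cfMat_nonneg l 1 0
    simpa [cfMat_cons, mul_apply, Fin.sum_univ_two] using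
      le_add_of_le_of_nonneg (one_le_mul_of_one_le_of_one_le ha hq) hp

theorem cf_eq_div_cfMat (l : List ℕ) (hl : ∀ a ∈ l, 1 ≤ a) : cf l = cfMat l 1 0 / cfMat l 0 0 := by
  induction l with
  | nil => simp [cf, cfMat_nil]
  | cons a l ih =>
    have hl' : ∀ x ∈ l, 1 ≤ x := fun x hx => hl x (List.mem_cons_of_mem _ hx)
    have hq := one_le_cfMat_zero_zero l hl'
    rw [cf, ih hl']
    simp only [cfMat_cons, mul_apply, Fin.sum_univ_two, of_apply, cons_val', cons_val_zero,
      cons_val_one, cons_val_fin_one, one_mul, zero_mul, add_zero]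
    field_simp

theorem cf_append_singleton_s11 (l : List ℕ) (hl : ∀ a ∈ l, 1 ≤ a) (m : ℕ) (hm : 1 ≤ m) :
    cf (l ++ [m]) =
      (m * cfMat l 1 0 + cfMat l 1 1) / (m * cfMat l 0 0 + cfMat l 0 1) := by
  have hlm : ∀ a ∈ l ++ [m], 1 ≤ a := by
    simpa [or_imp, forall_and] using ⟨hl, hm⟩
  rw [cf_eq_div_cfMat _ hlm, cfMat_append_singleton]
  simp [mul_apply, Fin.sum_univ_two, mul_comm]

theorem cf_append_singleton_sub (l : List ℕ) (hl : ∀ a ∈ l, 1 ≤ a) (x y : ℕ) (hx : 1 ≤ x)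
    (hy : 1 ≤ y) :
    cf (l ++ [x]) - cf (l ++ [y]) = (-1) ^ (l.length + 1) * ((x - y : ℝ) /
      ((x * cfMat l 0 0 + cfMat l 0 1) * (y * cfMat l 0 0 + cfMat l 0 1))) := by
  have hq := one_le_cfMat_zero_zero l hl
  have hq' := cfMat_nonneg l 0 1
  rw [cf_append_singleton_s11 l hl x hx, cf_append_singleton_s11 l hl y hy, div_sub_div _ _ (by positivity)
    (by positivity), pow_succ, ← det_cfMat, det_fin_two]
  ring

theorem cf_sub_cf_append_singleton (l : List ℕ) (hl : ∀ a ∈ l, 1 ≤ a) (x : ℕ) (hx : 1 ≤ x) :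
    cf l - cf (l ++ [x]) = (-1) ^ (l.length + 1) *
      (1 / (cfMat l 0 0 * (x * cfMat l 0 0 + cfMat l 0 1))) := by
  have hq := one_le_cfMat_zero_zero l hl
  have hq' := cfMat_nonneg l 0 1
  rw [cf_eq_div_cfMat l hl, cf_append_singleton_s11 l hl x hx, div_sub_div _ _ (by positivity)
    (by positivity), pow_succ, ← det_cfMat, det_fin_two]
  ring

theorem listOf_succ (a : ℕ → ℕ) (n : ℕ) : listOf a (n + 1) = listOf a n ++ [a (n + 1)] := by
  simp [listOf, List.range_succ]

theorem length_listOf (a : ℕ → ℕ) (n : ℕ) : (listOf a n).length = n := by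
  simp [listOf]

theorem one_le_of_mem_listOf {a : ℕ → ℕ} {n : ℕ} (ha : ∀ i, 1 ≤ i → i ≤ n → 1 ≤ a i) :
    ∀ x ∈ listOf a n, 1 ≤ x := by
  simp only [listOf, List.mem_map, List.mem_range]
  rintro _ ⟨i, hi, rfl⟩
  exact ha (i + 1) (by omega) hi

theorem cfMat_listOf_succ (a : ℕ → ℕ) (n : ℕ) :
    cfMat (listOf a (n + 1)) 0 0 = qden a (n + 1) ∧ cfMat (listOf a (n + 1)) 0 1 = qden a n := by
  induction n with
  | zero => simp [listOf, cfMat, qden]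
  | succ n ih =>
    rw [listOf_succ, cfMat_append_singleton]
    simp [mul_apply, Fin.sum_univ_two, ih.1, ih.2, qden, mul_comm]

theorem cfMat_listOf_zero_zero (a : ℕ → ℕ) (n : ℕ) : cfMat (listOf a n) 0 0 = qden a n := by
  cases n with
  | zero => simp [listOf, cfMat_nil, qden]
  | succ n => exact (cfMat_listOf_succ a n).1

theorem qden_succ_eq (a : ℕ → ℕ) (n : ℕ) :
    (qden a (n + 1) : ℝ) = a (n + 1) * qden a n + cfMat (listOf a n) 0 1 := by
  rw [← (cfMat_listOf_succ a n).1, listOf_succ, cfMat_append_singleton, ← cfMat_listOf_zero_zero]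
  simp [mul_apply, Fin.sum_univ_two, mul_comm]

theorem one_le_qden {a : ℕ → ℕ} {n : ℕ} (ha : ∀ i, 1 ≤ i → i ≤ n → 1 ≤ a i) :
    (1 : ℝ) ≤ qden a n := by
  rw [← cfMat_listOf_zero_zero]
  exact one_le_cfMat_zero_zero _ (one_le_of_mem_listOf ha)

section Differences

variable {a : ℕ → ℕ} {k : ℕ}

theorem qden_lt_qden_succ (ha : ∀ i, 1 ≤ i → i ≤ k → 1 ≤ a i) (hak : 2 ≤ a (k + 1)) :
    (qden a k : ℝ) < qden a (k + 1) := by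
  have hq := one_le_qden ha
  have hq' := cfMat_nonneg (listOf a k) 0 1
  have hak' : (2 : ℝ) ≤ a (k + 1) := by exact_mod_cast hak
  rw [qden_succ_eq]
  nlinarith

theorem cf_listOf_succ_sub_pred (ha : ∀ i, 1 ≤ i → i ≤ k → 1 ≤ a i) (hak : 2 ≤ a (k + 1)) :
    cf (listOf a (k + 1)) - cf (listOf a k ++ [a (k + 1) - 1]) = (-1) ^ (k + 1) *
      (1 / (qden a (k + 1) * (qden a (k + 1) - qden a k))) := by
  rw [listOf_succ, cf_append_singleton_sub _ (one_le_of_mem_listOf ha) _ _ (by omega) (by omega),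
    length_listOf, qden_succ_eq, cfMat_listOf_zero_zero, Nat.cast_sub (by omega)]
  push_cast
  ring

theorem cf_listOf_succ_sub_succ (ha : ∀ i, 1 ≤ i → i ≤ k + 1 → 1 ≤ a i) :
    cf (listOf a k ++ [a (k + 1) + 1]) - cf (listOf a (k + 1)) = (-1) ^ (k + 1) *
      (1 / (qden a (k + 1) * (qden a (k + 1) + qden a k))) := by
  have ha' : ∀ i, 1 ≤ i → i ≤ k → 1 ≤ a i := fun i hi hik => ha i hi (by omega)
  rw [listOf_succ, cf_append_singleton_sub _ (one_le_of_mem_listOf ha') _ _ (by omega)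
    (ha _ (by omega) le_rfl), length_listOf, qden_succ_eq, cfMat_listOf_zero_zero]
  push_cast
  ring

theorem cf_listOf_sub_succ (ha : ∀ i, 1 ≤ i → i ≤ k → 1 ≤ a i) :
    cf (listOf a k) - cf (listOf a k ++ [a (k + 1) + 1]) = (-1) ^ (k + 1) *
      (1 / (qden a k * (qden a (k + 1) + qden a k))) := by
  rw [cf_sub_cf_append_singleton _ (one_le_of_mem_listOf ha) _ (by omega), length_listOf,
    qden_succ_eq, cfMat_listOf_zero_zero]
  push_cast
  ring

end Differences

theorem hIco_inter_hIco_nonempty_iff {σ x y x' y' L L' R : ℝ} (hσ : σ = 1 ∨ σ = -1)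
    (hxy : y - x = σ * L) (hxy' : y' - x' = σ * L') (hyy' : y - y' = σ * R)
    (hL : 0 < L) (hL' : 0 < L') (hR : 0 < R) :
    (hIco x y ∩ hIco x' y').Nonempty ↔ R < L := by
  rcases hσ with rfl | rfl
  · rw [hIco, hIco, if_pos (by linarith), if_pos (by linarith), Set.Ico_inter_Ico,
      Set.nonempty_Ico, lt_inf_iff, sup_lt_iff, sup_lt_iff]
    constructor
    · rintro ⟨-, hxy', -⟩; linarith
    · intro h; exact ⟨⟨by linarith, by linarith⟩, by linarith, by linarith⟩
  · rw [hIco, hIco, if_neg (by linarith), if_neg (by linarith), Set.Ioc_inter_Ioc,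
      Set.nonempty_Ioc, lt_inf_iff, sup_lt_iff, sup_lt_iff]
    constructor
    · rintro ⟨⟨-, hy'x⟩, -⟩; linarith
    · intro h; exact ⟨⟨by linarith, by linarith⟩, by linarith, by linarith⟩

/-- `Bₙ ∩ Cₙ ≠ ∅ ↔ 1/(t_{n−1}(tₙ + t_{n−1})) < 1/(qₙ(qₙ − q_{n−1}))`. -/
theorem stmt11 (n : ℕ) (hn : 1 ≤ n) (b c : ℕ → ℕ)
    (hb : ∀ k : ℕ, 1 ≤ k → k ≤ n → 2 ≤ b k) (hc : ∀ k : ℕ, 1 ≤ k → k ≤ n → 1 ≤ c k) :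
    (Bset b c n ∩ Cset b c n).Nonempty ↔
      (1 : ℝ) / ((qden c (n - 1) : ℝ) * ((qden c n : ℝ) + (qden c (n - 1) : ℝ))) <
        (1 : ℝ) / ((qden b n : ℝ) * ((qden b n : ℝ) - (qden b (n - 1) : ℝ))) := by
  obtain ⟨k, rfl⟩ : ∃ k, n = k + 1 := ⟨n - 1, by omega⟩
  have hbk : 2 ≤ b (k + 1) := hb _ (by omega) le_rfl
  have hb' : ∀ i, 1 ≤ i → i ≤ k → 1 ≤ b i := fun i hi hik => one_le_two.trans (hb i hi (by omega))
  have hc' : ∀ i, 1 ≤ i → i ≤ k → 1 ≤ c i := fun i hi hik => hc i hi (by omega)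
  have hbq := qden_lt_qden_succ hb' hbk
  have hbq₀ := one_le_qden hb'
  have hcq₀ := one_le_qden hc'
  have hcq := one_le_qden hc
  simp only [Bset, Cset, Nat.add_sub_cancel]
  exact hIco_inter_hIco_nonempty_iff (neg_one_pow_eq_or ℝ (k + 1))
    ((add_sub_add_right_eq_sub _ _ _).trans (cf_listOf_succ_sub_pred hb' hbk))
    ((add_sub_add_right_eq_sub _ _ _).trans (cf_listOf_succ_sub_succ hc))
    (by rw [← cf_listOf_sub_succ hc']; ring)
    (one_div_pos.2 (mul_pos (by linarith) (sub_pos.2 hbq))) (by positivity) (by positivity)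

end ShulgaPaper
end
end
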